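/- arXiv:1605.07162 — 6 statements merged into one kernel-verified Lean document; each statement's English description precedes it below -/
import Mathlib

section
/- Let M be a matroid on ground set S with injective weight function μ: S → ℝ⁺, and let I be a basis of M. Then I is the maximum-weight basis of M if and only if for every e ∈ I, the set S^{>μ(e)} = {x ∈ S : μ(x) > μ(e)} does not block e. -/
/-!
Blocking is membership in the closure, so the condition says that no `e ∈ I` is spanned by the
elements heavier than it. If some `e ∈ I` were spanned by heavier elements, one of them could
replace `e` in `I`, increasing the weight. Conversely, under the condition every `x ∉ I` is the
lightest element of its fundamental circuit with respect to `I`, hence spanned by heavier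
elements of `I`; exchanging elements of a base `J` outside `I` for such heavier elements of `I`
one at a time raises the weight of `J` until it becomes `I`.
-/

open Matroid Set

variable {α : Type*}

/-- The `ℕ∞`-valued rank of a set `X` in a matroid `M`:
the supremum of the sizes of independent subsets of `X`. -/
noncomputable def Matroid.eRank' (M : Matroid α) (X : Set α) : ℕ∞ :=
  ⨆ I ∈ {I | M.Indep I ∧ I ⊆ X}, I.encard

/-- A set `A` *blocks* an element `e` if adding `e` to `A` does not increase the rank. -/
def Matroid.Blocks (M : Matroid α) (A : Set α) (e : α) : Prop :=
  M.eRank' (insert e A) = M.eRank' A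

/-- The total weight of a set of elements. -/
noncomputable def wt (μ : α → ℝ) (I : Set α) : ℝ := ∑ᶠ e ∈ I, μ e

/-- `I` is a maximum-weight base of `M` with respect to the weight function `μ`. -/
def IsMaxWeightBase (M : Matroid α) (μ : α → ℝ) (I : Set α) : Prop :=
  M.IsBase I ∧ ∀ J, M.IsBase J → wt μ J ≤ wt μ I

/-- The modified cost function `μ_{I,ε}` adding `ε` to the weight of each element of `I`. -/
noncomputable def modCost (μ : α → ℝ) (I : Set α) (ε : ℝ) : α → ℝ :=
  fun e => μ e + I.indicator (fun _ => ε) e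

/-- `I` is an `ε`-optimal base of `M` w.r.t. `μ`:
it is a maximum-weight base for the modified cost `μ_{I,ε}`. -/
def EpsOptimal (M : Matroid α) (μ : α → ℝ) (ε : ℝ) (I : Set α) : Prop :=
  IsMaxWeightBase M (modCost μ I ε) I

/-- Contraction of a matroid, defined by duality: `M ／ C = (M✶ ↾ (M.E \ C))✶`. -/
noncomputable def Matroid.contract' (M : Matroid α) (C : Set α) : Matroid α :=
  (M✶ ↾ (M.E \ C))✶

/-- The weight of a maximum-weight base of `M` with respect to `μ`. -/
noncomputable def OPTval (M : Matroid α) (μ : α → ℝ) : ℝ :=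
  sSup ((fun B => wt μ B) '' {B | M.IsBase B})

lemma wt_insert_sdiff_singleton (μ : α → ℝ) {I : Set α} {e f : α} (hI : I.Finite)
    (he : e ∈ I) (hf : f ∉ I) : wt μ (insert f (I \ {e})) + μ e = wt μ I + μ f := by
  have hsplit : wt μ I = μ e + wt μ (I \ {e}) := by
    conv_lhs => rw [← insert_sdiff_self_of_mem he]
    exact finsum_mem_insert μ (notMem_sdiff_of_mem (mem_singleton e)) (hI.subset sdiff_subset)
  have hadd : wt μ (insert f (I \ {e})) = μ f + wt μ (I \ {e}) :=
    finsum_mem_insert μ (fun h ↦ hf h.1) (hI.subset sdiff_subset)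
  linarith

namespace Matroid

variable {M : Matroid α} {μ : α → ℝ} {A B C I J X : Set α} {e x z : α}

lemma eRank'_eq_eRk (M : Matroid α) (X : Set α) : M.eRank' X = M.eRk X := by
  refine le_antisymm (iSup₂_le fun J hJ ↦ hJ.1.encard_le_eRk_of_subset hJ.2) ?_
  obtain ⟨I, hI⟩ := M.exists_isBasis' X
  rw [← hI.encard_eq_eRk]
  exact le_iSup₂_of_le I ⟨hI.indep, hI.subset⟩ le_rfl

lemma blocks_iff_mem_closure [M.RankFinite] (he : e ∈ M.E) : M.Blocks A e ↔ e ∈ M.closure A := by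
  rw [Matroid.Blocks, eRank'_eq_eRk, eRank'_eq_eRk]
  refine ⟨fun h ↦ by_contra fun hcl ↦ ?_, fun h ↦ ?_⟩
  · rw [eRk_insert_eq_add_one ⟨he, hcl⟩] at h
    exact (ENat.lt_add_one_iff (M.isRkFinite_set A).eRk_lt_top.ne).2 le_rfl |>.ne' h
  · rw [← eRk_insert_closure_eq, insert_eq_of_mem h, eRk_closure_eq]

lemma IsBase.exists_exchange_of_mem_closure (hB : M.IsBase B) (hxB : x ∈ B) (hxX : x ∉ X)
    (hcl : x ∈ M.closure X) : ∃ y ∈ X, y ∉ B ∧ M.IsBase (insert y (B \ {x})) := by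
  obtain ⟨y, ⟨hyX, hyE⟩, hy⟩ : ∃ y ∈ X ∩ M.E, y ∉ M.closure (B \ {x}) := by
    by_contra! h
    exact hB.indep.notMem_closure_sdiff_of_mem hxB
      (M.closure_subset_closure_of_subset_closure h (M.closure_inter_ground X ▸ hcl))
  have hyB : y ∉ B := fun hyB ↦ hy (M.mem_closure_of_mem ⟨hyB, fun h ↦ hxX (h ▸ hyX)⟩
    (sdiff_subset.trans hB.subset_ground))
  exact ⟨y, hyX, hyB, hB.exchange_base_of_notMem_closure hxB hy⟩

lemma IsCircuit.mem_closure_setOf_lt (hC : M.IsCircuit C) (hinj : InjOn μ C) (hz : z ∈ C)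
    (hmin : ∀ w ∈ C, μ z ≤ μ w) : z ∈ M.closure {w ∈ M.E | μ z < μ w} := by
  refine M.closure_subset_closure ?_ (hC.mem_closure_sdiff_singleton_of_mem hz)
  rintro w ⟨hwC, hwz⟩
  exact ⟨hC.subset_ground hwC, (hmin w hwC).lt_of_ne fun h ↦ hwz (hinj hwC hz h.symm)⟩

lemma Indep.mem_closure_setOf_lt [M.RankFinite] (hI : M.Indep I) (hinj : InjOn μ M.E)
    (hgreedy : ∀ e ∈ I, e ∉ M.closure {x ∈ M.E | μ e < μ x}) (hx : x ∈ M.closure I)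
    (hxI : x ∉ I) : x ∈ M.closure {y ∈ I | μ x < μ y} := by
  have hC := hI.fundCircuit_isCircuit hx hxI
  have hCI : M.fundCircuit x I ⊆ insert x I := M.fundCircuit_subset_insert x I
  obtain ⟨z, hzC, hzmin⟩ := (M.fundCircuit x I).exists_min_image μ
    ((hI.finite.insert x).subset hCI) ⟨x, M.mem_fundCircuit x I⟩
  -- The lightest element of the fundamental circuit is spanned by heavier elements,
  -- so it cannot lie in `I`.
  obtain rfl : z = x := by
    by_contra hzx
    exact hgreedy z ((hCI hzC).resolve_left hzx)
      (hC.mem_closure_setOf_lt (hinj.mono hC.subset_ground) hzC hzmin)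
  refine M.closure_subset_closure ?_ (hC.mem_closure_sdiff_singleton_of_mem hzC)
  rintro w ⟨hwC, hwz : w ≠ z⟩
  refine ⟨(hCI hwC).resolve_left hwz, (hzmin w hwC).lt_of_ne fun h ↦ hwz ?_⟩
  exact hinj (hC.subset_ground hwC) (hC.subset_ground hzC) h.symm

lemma IsBase.wt_le_of_forall_mem_closure [M.RankFinite] (hI : M.IsBase I)
    (hspan : ∀ x ∈ M.E \ I, x ∈ M.closure {y ∈ I | μ x < μ y}) (hJ : M.IsBase J) :
    wt μ J ≤ wt μ I := by
  induction h : (J \ I).ncard using Nat.strong_induction_on generalizing J with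
  | _ n ih =>
  obtain hJI | ⟨f, hfJ, hfI⟩ := (J \ I).eq_empty_or_nonempty
  · rw [hJ.eq_of_subset_isBase hI (sdiff_eq_empty.mp hJI)]
  obtain ⟨e, ⟨heI, hfe⟩, heJ, hJ'⟩ := hJ.exists_exchange_of_mem_closure hfJ (fun h ↦ hfI h.1)
    (hspan f ⟨hJ.subset_ground hfJ, hfI⟩)
  have hlt : (insert e (J \ {f}) \ I).ncard < n := by
    rw [insert_sdiff_of_mem _ heI, sdiff_sdiff_comm, ← h]
    exact ncard_sdiff_singleton_lt_of_mem ⟨hfJ, hfI⟩ hJ.indep.finite.sdiff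
  have hle := ih _ hlt hJ' rfl
  have hswap := wt_insert_sdiff_singleton μ hJ.indep.finite hfJ heJ
  linarith

end Matroid

open Matroid

lemma IsMaxWeightBase.notMem_closure_setOf_lt {M : Matroid α} [M.RankFinite] {μ : α → ℝ}
    {I : Set α} {e : α} (h : IsMaxWeightBase M μ I) (he : e ∈ I) :
    e ∉ M.closure {x ∈ M.E | μ e < μ x} := by
  intro hcl
  obtain ⟨f, ⟨-, hef⟩, hfI, hbase⟩ := h.1.exists_exchange_of_mem_closure he (fun h ↦ h.2.false) hcl
  have hle := h.2 _ hbase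
  have hswap := wt_insert_sdiff_singleton μ h.1.indep.finite he hfI
  linarith

lemma isMaxWeightBase_iff_forall_notMem_closure {M : Matroid α} [M.RankFinite] {μ : α → ℝ}
    {I : Set α} (hinj : InjOn μ M.E) (hI : M.IsBase I) :
    IsMaxWeightBase M μ I ↔ ∀ e ∈ I, e ∉ M.closure {x ∈ M.E | μ e < μ x} := by
  refine ⟨fun h e he ↦ h.notMem_closure_setOf_lt he, fun hgreedy ↦ ⟨hI, fun J hJ ↦ ?_⟩⟩
  refine hI.wt_le_of_forall_mem_closure (fun x hx ↦ ?_) hJ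
  exact hI.indep.mem_closure_setOf_lt hinj hgreedy (hI.closure_eq ▸ hx.1) hx.2

theorem isMaxWeightBase_iff_not_blocks_general (M : Matroid α) [M.Finite] (μ : α → ℝ)
    (hinj : Set.InjOn μ M.E)
    (I : Set α) (hI : M.IsBase I) :
    IsMaxWeightBase M μ I ↔ ∀ e ∈ I, ¬ M.Blocks {x ∈ M.E | μ e < μ x} e := by
  rw [isMaxWeightBase_iff_forall_notMem_closure hinj hI]
  exact forall₂_congr fun e he ↦ not_congr (blocks_iff_mem_closure (hI.subset_ground he)).symm

/-- A base `I` is the maximum-weight base iff for every `e ∈ I`, the set of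
elements of strictly larger weight does not block `e`. -/
theorem isMaxWeightBase_iff_not_blocks (M : Matroid α) [M.Finite] (μ : α → ℝ)
    (hinj : Set.InjOn μ M.E) (hpos : ∀ e ∈ M.E, 0 < μ e)
    (I : Set α) (hI : M.IsBase I) :
    IsMaxWeightBase M μ I ↔ ∀ e ∈ I, ¬ M.Blocks {x ∈ M.E | μ e < μ x} e :=
  isMaxWeightBase_iff_not_blocks_general M μ hinj I hI
end

section
/- Let A ⊆ B ⊆ C be subsets of the ground set of a matroid M with cost function μ. If A is an ε₁-approximate subset of B, and B is an ε₂-approximate subset of C, then A is an (ε₁ + ε₂)-approximate subset of C. -/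
open Matroid Set

variable {α : Type*}

/-- `A` is an `ε`-approximate subset of `B` if some independent set of `M ↾ A`
is an `ε`-optimal base of `M ↾ B`. -/
def IsApproxSubset (M : Matroid α) (μ : α → ℝ) (ε : ℝ) (A B : Set α) : Prop :=
  ∃ I, (M ↾ A).Indep I ∧ EpsOptimal (M ↾ B) μ ε I

/-!
In a matroid of finite rank, a base `I` is `ε`-optimal exactly when no single exchange
`I - f + e` gains more than `ε`, i.e. `μ e ≤ μ f + ε`; the nontrivial direction walks from any
base `J` to `I` by symmetric exchanges. So let `I₁` (in `B`) and `I₂ ⊆ B` (in `C`) be the given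
optimal bases, and let `I₁ - f + e` be independent. If `e ∈ B`, optimality of `I₁` in `B` gives
`μ e ≤ μ f + ε₁`. Otherwise the fundamental circuit of `e` in `I₂` contains some `g` outside
the closure of `I₁ - f`; then `I₂ - g + e` and `I₁ - f + g` are both independent (or `g = f`),
so `μ e ≤ μ g + ε₂ ≤ μ f + ε₁ + ε₂`.
-/

section Weight

variable {S : Set α} {e : α}

lemma wt_insert (w : α → ℝ) (hS : S.Finite) (he : e ∉ S) :
    wt w (insert e S) = w e + wt w S :=
  finsum_mem_insert w he hS

lemma wt_eq_add_wt_sdiff_singleton (w : α → ℝ) (hS : S.Finite) (he : e ∈ S) :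
    wt w S = w e + wt w (S \ {e}) := by
  have h := wt_insert w hS.sdiff (fun h : e ∈ S \ {e} ↦ h.2 rfl)
  rwa [insert_sdiff_singleton, insert_eq_of_mem he] at h

end Weight

namespace Matroid

variable {M : Matroid α} {w μ : α → ℝ} {ε₁ ε₂ : ℝ} {I J X : Set α} {e f : α}

lemma Indep.exists_insert_sdiff_indep_of_notMem_closure (hI : M.Indep I)
    (he : e ∈ M.closure I \ I) (heX : e ∉ M.closure X) :
    ∃ f ∈ I, f ∉ M.closure X ∧ M.Indep (insert e (I \ {f})) := by
  have hC := hI.fundCircuit_isCircuit he.1 he.2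
  have hC_not_subset : ¬ M.fundCircuit e I \ {e} ⊆ M.closure X := fun h ↦
    heX <| M.closure_subset_closure_of_subset_closure h <|
      hC.mem_closure_sdiff_singleton_of_mem (M.mem_fundCircuit e I)
  obtain ⟨f, ⟨hfC, hfe⟩, hfX⟩ := not_subset.1 hC_not_subset
  refine ⟨f, (M.fundCircuit_subset_insert e I hfC).resolve_left hfe, hfX, ?_⟩
  rw [insert_sdiff_singleton_comm (Ne.symm hfe)]
  exact (hI.mem_fundCircuit_iff he.1 he.2).1 hfC

lemma IsBase.exists_symm_exchange (hI : M.IsBase I) (hJ : M.IsBase J) (he : e ∈ J \ I) :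
    ∃ f ∈ I \ J, M.Indep (insert e (I \ {f})) ∧ M.IsBase (insert f (J \ {e})) := by
  obtain ⟨f, hfI, hfJ, hind⟩ := hI.indep.exists_insert_sdiff_indep_of_notMem_closure
    ⟨hI.closure_eq ▸ hJ.subset_ground he.1, he.2⟩ (hJ.indep.notMem_closure_sdiff_of_mem he.1)
  have hfe : f ≠ e := fun h ↦ he.2 (h ▸ hfI)
  have hfJ' : f ∉ J := fun h ↦
    hfJ (M.mem_closure_of_mem ⟨h, hfe⟩ (sdiff_subset.trans hJ.subset_ground))
  exact ⟨f, ⟨hfI, hfJ'⟩, hind, hJ.exchange_base_of_notMem_closure he.1 hfJ (hI.subset_ground hfI)⟩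

lemma IsMaxWeightBase.le_of_insert_sdiff_indep [M.RankFinite] (h : IsMaxWeightBase M w I)
    (he : e ∉ I) (hf : f ∈ I) (hind : M.Indep (insert e (I \ {f}))) : w e ≤ w f := by
  have hwt := h.2 _ (h.1.exchange_isBase_of_indep he hind)
  rw [wt_insert w h.1.finite.sdiff (fun h ↦ he h.1),
    wt_eq_add_wt_sdiff_singleton w h.1.finite hf] at hwt
  linarith

lemma isMaxWeightBase_of_forall_exchange [M.RankFinite] (hI : M.IsBase I)
    (h : ∀ e ∉ I, ∀ f ∈ I, M.Indep (insert e (I \ {f})) → w e ≤ w f) :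
    IsMaxWeightBase M w I := by
  refine ⟨hI, fun J hJ ↦ ?_⟩
  induction hn : (J \ I).ncard generalizing J with
  | zero =>
    rw [hJ.eq_of_subset_isBase hI (sdiff_eq_empty.1 ((ncard_eq_zero hJ.finite.sdiff).1 hn))]
  | succ n ih =>
    obtain ⟨e, he⟩ := nonempty_of_ncard_ne_zero (s := J \ I) (by omega)
    obtain ⟨f, hf, hind, hJ'⟩ := hI.exists_symm_exchange hJ he
    have hcard : (insert f (J \ {e}) \ I).ncard = n := by
      rw [show insert f (J \ {e}) \ I = (J \ I) \ {e} by grind,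
        ncard_sdiff_singleton_of_mem he, hn, Nat.add_sub_cancel]
    calc wt w J = w e + wt w (J \ {e}) := wt_eq_add_wt_sdiff_singleton w hJ.finite he.1
      _ ≤ w f + wt w (J \ {e}) := by gcongr; exact h e he.2 f hf.1 hind
      _ = wt w (insert f (J \ {e})) := (wt_insert w hJ.finite.sdiff (fun h ↦ hf.2 h.1)).symm
      _ ≤ wt w I := ih _ hJ' hcard

theorem isMaxWeightBase_iff_forall_exchange [M.RankFinite] :
    IsMaxWeightBase M w I ↔
      M.IsBase I ∧ ∀ e ∉ I, ∀ f ∈ I, M.Indep (insert e (I \ {f})) → w e ≤ w f :=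
  ⟨fun h ↦ ⟨h.1, fun _ he _ hf ↦ h.le_of_insert_sdiff_indep he hf⟩,
    fun h ↦ isMaxWeightBase_of_forall_exchange h.1 h.2⟩

theorem epsOptimal_iff_forall_exchange [M.RankFinite] {ε : ℝ} :
    EpsOptimal M μ ε I ↔
      M.IsBase I ∧ ∀ e ∉ I, ∀ f ∈ I, M.Indep (insert e (I \ {f})) → μ e ≤ μ f + ε := by
  rw [EpsOptimal, isMaxWeightBase_iff_forall_exchange]
  refine and_congr_right fun _ ↦ forall₂_congr fun e he ↦ forall₂_congr fun f hf ↦ ?_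
  simp [modCost, he, hf]

lemma isBase_of_isBase_restrict_of_subset {B : Set α} (hI : (M ↾ X).IsBase I)
    (hB : M.IsBase B) (hBX : B ⊆ X) : M.IsBase I := by
  have hIX := isBase_restrict_iff'.1 hI
  refine hIX.indep.isBase_of_ground_subset_closure ?_
  rw [← hB.closure_eq, hIX.closure_eq_closure]
  exact M.closure_subset_closure hBX

theorem EpsOptimal.add_of_restrict [M.RankFinite] (h₁ : EpsOptimal (M ↾ X) μ ε₁ I)
    (h₂ : EpsOptimal M μ ε₂ J) (hJX : J ⊆ X) (hε₁ : 0 ≤ ε₁) (hε₂ : 0 ≤ ε₂) :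
    EpsOptimal M μ (ε₁ + ε₂) I := by
  rw [epsOptimal_iff_forall_exchange] at h₁ h₂ ⊢
  obtain ⟨hI, hI_exch⟩ := h₁
  obtain ⟨hJ, hJ_exch⟩ := h₂
  refine ⟨isBase_of_isBase_restrict_of_subset hI hJ hJX, fun e heI f hfI hind ↦ ?_⟩
  have hX_exch : ∀ g ∈ X, g ∉ I → M.Indep (insert g (I \ {f})) → μ g ≤ μ f + ε₁ :=
    fun g hgX hgI hg ↦ hI_exch g hgI f hfI <| restrict_indep_iff.2
      ⟨hg, insert_subset hgX (sdiff_subset.trans hI.subset_ground)⟩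
  by_cases heX : e ∈ X
  · linarith [hX_exch e heX heI hind]
  have hIf : M.Indep (I \ {f}) := hind.subset (subset_insert _ _)
  have heIf : e ∉ M.closure (I \ {f}) :=
    ((hIf.insert_indep_iff_of_notMem fun h ↦ heI h.1).1 hind).2
  obtain ⟨g, hgJ, hgIf, hg_exch⟩ := hJ.indep.exists_insert_sdiff_indep_of_notMem_closure
    ⟨hJ.closure_eq ▸ hind.subset_ground (mem_insert _ _), fun h ↦ heX (hJX h)⟩ heIf
  have heg := hJ_exch e (fun h ↦ heX (hJX h)) g hgJ hg_exch
  obtain rfl | hgf := eq_or_ne g f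
  · linarith
  have hgI : g ∉ I := fun h ↦ hgIf (M.mem_closure_of_mem ⟨h, hgf⟩ hIf.subset_ground)
  have hgf_exch := hX_exch g (hJX hgJ) hgI
    ((hIf.insert_indep_iff_of_notMem fun h ↦ hgI h.1).2 ⟨hJ.subset_ground hgJ, hgIf⟩)
  linarith

end Matroid

theorem isApproxSubset_trans_general (M : Matroid α) [M.Finite] (μ : α → ℝ)
    (ε₁ ε₂ : ℝ) (hε₁ : 0 < ε₁) (hε₂ : 0 < ε₂)
    (A B C : Set α) (hBC : B ⊆ C)
    (h₁ : IsApproxSubset M μ ε₁ A B) (h₂ : IsApproxSubset M μ ε₂ B C) :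
    IsApproxSubset M μ (ε₁ + ε₂) A C := by
  obtain ⟨I₁, hI₁A, hI₁⟩ := h₁
  obtain ⟨I₂, hI₂B, hI₂⟩ := h₂
  rw [← restrict_restrict_eq M hBC] at hI₁
  exact ⟨I₁, hI₁A, hI₁.add_of_restrict hI₂ hI₂B.subset_ground hε₁.le hε₂.le⟩

/-- Transitivity of approximate subsets: if `A` is an `ε₁`-approximate subset of `B`
and `B` is an `ε₂`-approximate subset of `C`, then `A` is an
`(ε₁+ε₂)`-approximate subset of `C`. -/
theorem isApproxSubset_trans (M : Matroid α) [M.Finite] (μ : α → ℝ)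
    (hpos : ∀ e ∈ M.E, 0 < μ e) (ε₁ ε₂ : ℝ) (hε₁ : 0 < ε₁) (hε₂ : 0 < ε₂)
    (A B C : Set α) (hAB : A ⊆ B) (hBC : B ⊆ C) (hC : C ⊆ M.E)
    (h₁ : IsApproxSubset M μ ε₁ A B) (h₂ : IsApproxSubset M μ ε₂ B C) :
    IsApproxSubset M μ (ε₁ + ε₂) A C :=
  isApproxSubset_trans_general M μ ε₁ ε₂ hε₁ hε₂ A B C hBC h₁ h₂
end

section
/- In a matroid M with distinct weights, every ε-optimal basis I is elementwise-ε-optimal: if a₁ ≥ a₂ ≥ … ≥ a_k are the weights of I sorted in decreasing order and o₁ ≥ o₂ ≥ … ≥ o_k are the weights of the unique maximum-weight basis sorted decreasingly, then a_i ≥ o_i − ε for all i ∈ [k]. -/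
open Matroid Set

variable {α : Type*}

/-! For every threshold `t`, an `ε`-optimal base `I` has at least as many elements heavier than
`t` as any independent set `O` has elements heavier than `t + ε`: otherwise augmentation yields
`e ∉ I` with `μ e > t + ε` such that `insert e B` is independent, where `B` is the set of elements of
`I` heavier than `t`, and the fundamental circuit of `e` in `I` then provides `f ∈ I \ B` whose
exchange for `e` gains more than `ε`. Taking `t = a_i` and counting through the sorted lists gives
`o_i ≤ a_i + ε`. -/

namespace List

variable {β : Type*} [LinearOrder β] {l : List β} {i : ℕ}

lemma SortedGT.mem_and_getElem_lt_iff (hl : l.SortedGT) (hi : i < l.length) {v : β} :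
    v ∈ l ∧ l[i] < v ↔ v ∈ l.take i := by
  rw [mem_take_iff_getElem]
  constructor
  · rintro ⟨hv, hiv⟩
    obtain ⟨j, hj, rfl⟩ := mem_iff_getElem.mp hv
    exact ⟨j, lt_min ((hl.getElem_lt_getElem_iff).mp hiv) hj, rfl⟩
  · rintro ⟨j, hj, rfl⟩
    exact ⟨getElem_mem _, hl.getElem_lt_getElem_iff.mpr (lt_of_lt_of_le hj (min_le_left _ _))⟩

lemma SortedGT.encard_inter_Ioi_getElem (hl : l.SortedGT) (hi : i < l.length) :
    ({v | v ∈ l} ∩ Ioi l[i]).encard = i := by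
  have hset : {v | v ∈ l} ∩ Ioi l[i] = ↑(l.take i).toFinset := by
    ext v
    simpa using hl.mem_and_getElem_lt_iff hi
  rw [hset, encard_coe_eq_coe_finsetCard,
    toFinset_card_of_nodup (hl.nodup.sublist (take_sublist _ _)), length_take,
    min_eq_left hi.le]

lemma SortedGT.encard_inter_Ici_getElem (hl : l.SortedGT) (hi : i < l.length) :
    ({v | v ∈ l} ∩ Ici l[i]).encard = i + 1 := by
  rw [← Ioi_insert, inter_insert_of_mem (show l[i] ∈ {v | v ∈ l} from getElem_mem hi),
    encard_insert_of_notMem (fun h => lt_irrefl _ h.2), hl.encard_inter_Ioi_getElem hi]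

end List

lemma Set.InjOn.encard_inter_preimage {β : Type*} {f : α → β} {s : Set α} (hf : InjOn f s)
    (t : Set β) : (s ∩ f ⁻¹' t).encard = (f '' s ∩ t).encard := by
  rw [← image_inter_preimage, (hf.mono inter_subset_left).encard_image]

lemma wt_insert_sdiff_singleton_add (μ : α → ℝ) {I : Set α} (hI : I.Finite) {e f : α}
    (he : e ∉ I) (hf : f ∈ I) :
    wt μ (insert e I \ {f}) + μ f = μ e + wt μ I := by
  have hfin : (insert e I \ {f}).Finite := (hI.insert e).sdiff
  calc wt μ (insert e I \ {f}) + μ f = wt μ (insert f (insert e I \ {f})) := by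
        rw [wt, wt, finsum_mem_insert μ (fun h => h.2 rfl) hfin, add_comm]
    _ = μ e + wt μ I := by
        rw [insert_sdiff_singleton, insert_eq_of_mem (mem_insert_of_mem e hf), wt, wt,
          finsum_mem_insert μ he hI]

lemma Matroid.IsBase.exists_isBase_insert_sdiff_singleton {M : Matroid α} {I B : Set α} {e : α}
    (hI : M.IsBase I) (heI : e ∉ I) (heB : M.Indep (insert e B)) :
    ∃ f ∈ I \ B, M.IsBase (insert e I \ {f}) := by
  have heE : e ∈ M.E := heB.subset_ground (mem_insert e B)
  have hC : M.IsCircuit (M.fundCircuit e I) := hI.fundCircuit_isCircuit heE heI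
  obtain ⟨f, hfC, hfeB⟩ := not_subset.mp fun h => hC.not_indep (heB.subset h)
  have hfI : f ∈ I :=
    ((M.fundCircuit_subset_insert e I hfC).resolve_left fun hfe => hfeB (hfe ▸ mem_insert f B))
  refine ⟨f, ⟨hfI, fun hfB => hfeB (mem_insert_of_mem e hfB)⟩, ?_⟩
  refine hI.exchange_isBase_of_indep' hfI heI ?_
  exact (hI.indep.mem_fundCircuit_iff (by rw [hI.closure_eq]; exact heE) heI).mp hfC

section EpsOptimal

variable {M : Matroid α} {μ : α → ℝ} {ε : ℝ} {I : Set α}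

lemma EpsOptimal.le_add_of_isBase_exchange (hI : EpsOptimal M μ ε I) (hIfin : I.Finite)
    {e f : α} (he : e ∉ I) (hf : f ∈ I) (hB : M.IsBase (insert e I \ {f})) :
    μ e ≤ μ f + ε := by
  have hle := hI.2 _ hB
  have hsum := wt_insert_sdiff_singleton_add (modCost μ I ε) hIfin he hf
  simp only [modCost, indicator_of_notMem he, indicator_of_mem hf] at hsum
  linarith

theorem EpsOptimal.encard_inter_preimage_Ioi_le (hI : EpsOptimal M μ ε I) (hIfin : I.Finite)
    (hε : 0 ≤ ε) {O : Set α} (hO : M.Indep O) (t : ℝ) :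
    (O ∩ μ ⁻¹' Ioi (t + ε)).encard ≤ (I ∩ μ ⁻¹' Ioi t).encard := by
  set B := I ∩ μ ⁻¹' Ioi t
  by_contra! hlt
  obtain ⟨e, ⟨⟨-, heε⟩, heB⟩, hins⟩ :=
    (hI.1.indep.subset inter_subset_left).augment (hO.subset inter_subset_left) hlt
  simp only [mem_preimage, mem_Ioi] at heε
  have heI : e ∉ I := fun heI => heB ⟨heI, show t < μ e by linarith⟩
  obtain ⟨f, ⟨hfI, hfB⟩, hbase⟩ := hI.1.exists_isBase_insert_sdiff_singleton heI hins
  have hft : μ f ≤ t := not_lt.mp fun h => hfB ⟨hfI, h⟩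
  have hexch := hI.le_add_of_isBase_exchange hIfin heI hfI hbase
  linarith

end EpsOptimal

theorem epsOptimal_elementwise_general (M : Matroid α) (μ : α → ℝ)
    (hinj : Set.InjOn μ M.E)
    (ε : ℝ) (hε : 0 < ε)
    (I : Set α) (hI : EpsOptimal M μ ε I)
    (O : Set α) (hO : IsMaxWeightBase M μ O)
    (hIfin : I.Finite) (hOfin : O.Finite)
    (aL oL : List ℝ)
    (haL : aL = ((hIfin.toFinset.image μ).sort (· ≤ ·)).reverse)
    (hoL : oL = ((hOfin.toFinset.image μ).sort (· ≤ ·)).reverse) :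
    ∀ (i : ℕ) (hia : i < aL.length) (hio : i < oL.length),
      oL.get ⟨i, hio⟩ - ε ≤ aL.get ⟨i, hia⟩ := by
  intro i hia hio
  have haS : aL.SortedGT := haL ▸ (Finset.sortedLT_sort _).reverse
  have hoS : oL.SortedGT := hoL ▸ (Finset.sortedLT_sort _).reverse
  have haI : {v | v ∈ aL} = μ '' I := by subst haL; ext; simp
  have hoO : {v | v ∈ oL} = μ '' O := by subst hoL; ext; simp
  simp only [List.get_eq_getElem]
  by_contra! hlt
  have hcount := hI.encard_inter_preimage_Ioi_le hIfin hε.le hO.1.indep aL[i]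
  rw [(hinj.mono hO.1.subset_ground).encard_inter_preimage,
    (hinj.mono hI.1.subset_ground).encard_inter_preimage, ← haI, ← hoO,
    haS.encard_inter_Ioi_getElem hia] at hcount
  have hmono : ({v | v ∈ oL} ∩ Ici oL[i]).encard ≤ ({v | v ∈ oL} ∩ Ioi (aL[i] + ε)).encard :=
    encard_le_encard (inter_subset_inter_right _ (Ici_subset_Ioi.mpr (by linarith)))
  rw [hoS.encard_inter_Ici_getElem hio] at hmono
  have hsucc_le := hmono.trans hcount
  norm_cast at hsucc_le
  omega

/-- Every `ε`-optimal base is elementwise-`ε`-optimal: if the weights of `I` and of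
the unique maximum-weight base `O` are sorted in decreasing order, then the `i`-th
largest weight of `I` is at least the `i`-th largest weight of `O` minus `ε`. -/
theorem epsOptimal_elementwise (M : Matroid α) [M.Finite] (μ : α → ℝ)
    (hinj : Set.InjOn μ M.E) (hpos : ∀ e ∈ M.E, 0 < μ e)
    (ε : ℝ) (hε : 0 < ε)
    (I : Set α) (hI : EpsOptimal M μ ε I)
    (O : Set α) (hO : IsMaxWeightBase M μ O)
    (hOuniq : ∀ B, IsMaxWeightBase M μ B → B = O)
    (hIfin : I.Finite) (hOfin : O.Finite)
    (aL oL : List ℝ)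
    (haL : aL = ((hIfin.toFinset.image μ).sort (· ≤ ·)).reverse)
    (hoL : oL = ((hOfin.toFinset.image μ).sort (· ≤ ·)).reverse) :
    ∀ (i : ℕ) (hia : i < aL.length) (hio : i < oL.length),
      oL.get ⟨i, hio⟩ - ε ≤ aL.get ⟨i, hia⟩ :=
  epsOptimal_elementwise_general M μ hinj ε hε I hI O hO hIfin hOfin aL oL haL hoL
end

section
/- Let M be a matroid with cost μ, let ε > 0, and let I be an ε-optimal basis. For every r ∈ ℝ, letting D_r = (S \ I)^{≥ r+ε} ∪ I^{≥ r}, the set I^{≥r} is a basis of the restriction M|D_r. -/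
open Matroid Set

variable {α : Type*}

/-! If some `e ∉ I` with `μ e ≥ r + ε` were independent of `I^{≥ r}`, the fundamental circuit of
`e` in `I` would contain some `y ∈ I` with `μ y < r`. Swapping `y` for `e` gives a base whose
modified cost exceeds that of `I` by `μ e - μ y - ε > 0`, contradicting `ε`-optimality. -/

lemma wt_insert_sdiff_singleton_s15 (μ : α → ℝ) {B : Set α} {e y : α} (hB : B.Finite)
    (hy : y ∈ B) (he : e ∉ B) : wt μ (insert e (B \ {y})) = wt μ B - μ y + μ e := by
  have hsplit : wt μ B = μ y + wt μ (B \ {y}) := by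
    rw [wt, wt, ← finsum_mem_insert μ (a := y) (s := B \ {y}) (fun h ↦ h.2 rfl) hB.sdiff,
      insert_sdiff_singleton, insert_eq_of_mem hy]
  rw [wt, finsum_mem_insert μ (fun h ↦ he h.1) hB.sdiff, hsplit, wt]
  ring

lemma modCost_of_mem {μ : α → ℝ} {I : Set α} {ε : ℝ} {e : α} (he : e ∈ I) :
    modCost μ I ε e = μ e + ε := by
  simp [modCost, indicator_of_mem he]

lemma modCost_of_notMem {μ : α → ℝ} {I : Set α} {ε : ℝ} {e : α} (he : e ∉ I) :
    modCost μ I ε e = μ e := by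
  simp [modCost, indicator_of_notMem he]

/-- The exchange happens inside the fundamental circuit of `e` in `B`: it is not contained in
the independent set `insert e J`, so it meets `B \ J`. -/
lemma Matroid.IsBase.exists_exchange_of_insert_indep {M : Matroid α} {B J : Set α} {e : α}
    (hB : M.IsBase B) (he : e ∈ M.E \ B) (hJe : M.Indep (insert e J)) :
    ∃ y ∈ B \ J, M.IsBase (insert e (B \ {y})) := by
  have hC := hB.fundCircuit_isCircuit he.1 he.2
  obtain ⟨y, hyC, hyJe⟩ := not_subset.1 fun hCJ ↦ hC.not_indep (hJe.subset hCJ)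
  have hye : y ≠ e := fun h ↦ hyJe (h ▸ mem_insert e J)
  have hyB : y ∈ B := (mem_insert_iff.1 (M.fundCircuit_subset_insert e B hyC)).resolve_left hye
  have hindep := (hB.indep.mem_fundCircuit_iff (by rw [hB.closure_eq]; exact he.1) he.2).1 hyC
  refine ⟨y, ⟨hyB, fun hyJ ↦ hyJe (mem_insert_of_mem e hyJ)⟩, ?_⟩
  rw [insert_sdiff_singleton_comm hye.symm]
  exact hB.exchange_isBase_of_indep' hyB he.2 hindep

lemma EpsOptimal.le_add_of_exchange {M : Matroid α} [M.Finite] {μ : α → ℝ} {ε : ℝ}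
    {I : Set α} (hI : EpsOptimal M μ ε I) {e y : α} (hy : y ∈ I) (he : e ∉ I)
    (hB : M.IsBase (insert e (I \ {y}))) : μ e ≤ μ y + ε := by
  have hle := hI.2 _ hB
  rw [wt_insert_sdiff_singleton_s15 _ (M.ground_finite.subset hI.1.subset_ground) hy he,
    modCost_of_mem hy, modCost_of_notMem he] at hle
  linarith

theorem epsOptimal_basis_threshold_general (M : Matroid α) [M.Finite] (μ : α → ℝ)
    (ε : ℝ)
    (I : Set α) (hI : EpsOptimal M μ ε I) (r : ℝ) :
    M.IsBasis {x ∈ I | r ≤ μ x} ({x ∈ M.E \ I | r + ε ≤ μ x} ∪ {x ∈ I | r ≤ μ x}) := by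
  have hJI : {x ∈ I | r ≤ μ x} ⊆ I := sep_subset I _
  refine (hI.1.indep.subset hJI).isBasis_of_forall_insert subset_union_right ?_
  rintro e ⟨⟨⟨heE, heI⟩, hre⟩ | heJ, hnotJ⟩
  swap
  · exact absurd heJ hnotJ
  refine (not_indep_iff (insert_subset heE (hJI.trans hI.1.subset_ground))).1 fun hJe ↦ ?_
  obtain ⟨y, ⟨hyI, hyJ⟩, hB⟩ := hI.1.exists_exchange_of_insert_indep ⟨heE, heI⟩ hJe
  have hyr : μ y < r := lt_of_not_ge fun h ↦ hyJ ⟨hyI, h⟩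
  linarith [hI.le_add_of_exchange hyI heI hB]

/-- If `I` is an `ε`-optimal base, then for every real `r`, the set `I^{≥ r}`
is a basis of the restriction of `M` to `D_r = (S \ I)^{≥ r+ε} ∪ I^{≥ r}`. -/
theorem epsOptimal_basis_threshold (M : Matroid α) [M.Finite] (μ : α → ℝ)
    (hpos : ∀ e ∈ M.E, 0 < μ e) (ε : ℝ) (hε : 0 < ε)
    (I : Set α) (hI : EpsOptimal M μ ε I) (r : ℝ) :
    M.IsBasis {x ∈ I | r ≤ μ x} ({x ∈ M.E \ I | r + ε ≤ μ x} ∪ {x ∈ I | r ≤ μ x}) :=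
  epsOptimal_basis_threshold_general M μ ε I hI r
end

section
/- Let X₁, …, X_k be independent random variables where each X_i takes a value a_i ≥ 0 with probability at most exp(−a_i² t) for some t ≥ 0, and takes value 0 otherwise. Let X = (1/k)∑_{i=1}^k X_i. Then for every ε > 0, if t ≥ 2/ε², we have Pr[X > ε] < exp(−ε² t k / 2). -/
/-!
If the average exceeds `ε`, then for the set `S` of indices with `Xᵢ ≠ 0` we have
`∑_{i ∈ S} aᵢ > ε k`, and by Cauchy–Schwarz `∑_{i ∈ S} aᵢ² ≥ ε² k`. By independence the event
`Xᵢ = aᵢ` for all `i ∈ S` has probability at most `exp(-t ∑_{i ∈ S} aᵢ²) ≤ exp(-ε² t k)`.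
A union bound over the at most `2^k` sets `S` gives `2^k exp(-ε² t k)`, which is below
`exp(-ε² t k / 2)` because `ε² t ≥ 2 > 2 log 2`.
-/

open MeasureTheory ProbabilityTheory Finset

lemma sq_mul_le_sum_sq_of_mul_le_sum {ι : Type*} {S : Finset ι} {a : ι → ℝ} {c : ℝ} {n : ℕ}
    (hc : 0 ≤ c) (hS : #S ≤ n) (h : c * n ≤ ∑ i ∈ S, a i) :
    c ^ 2 * n ≤ ∑ i ∈ S, a i ^ 2 := by
  have hsq : 0 ≤ ∑ i ∈ S, a i ^ 2 := sum_nonneg fun i _ => sq_nonneg (a i)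
  rcases Nat.eq_zero_or_pos n with rfl | hn
  · simpa using hsq
  have hn' : (0 : ℝ) < n := by exact_mod_cast hn
  have : (c * n) ^ 2 ≤ n * ∑ i ∈ S, a i ^ 2 :=
    calc (c * n) ^ 2 ≤ (∑ i ∈ S, a i) ^ 2 := pow_le_pow_left₀ (by positivity) h 2
      _ ≤ #S * ∑ i ∈ S, a i ^ 2 := sq_sum_le_card_mul_sum_sq
      _ ≤ n * ∑ i ∈ S, a i ^ 2 := by gcongr
  nlinarith

lemma two_pow_mul_exp_neg_lt {k : ℕ} (hk : 0 < k) {s : ℝ} (hs : 2 ≤ s) :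
    2 ^ k * Real.exp (-(s * k)) < Real.exp (-(s * k) / 2) := by
  have hk' : (1 : ℝ) ≤ k := by exact_mod_cast hk
  rw [← Real.rpow_natCast, Real.rpow_def_of_pos two_pos, ← Real.exp_add, Real.exp_lt_exp]
  nlinarith [Real.log_two_lt_d9]

lemma measure_biUnion_finset_le_card_mul {α ι : Type*} [MeasurableSpace α] {μ : Measure α}
    {I : Finset ι} {s : ι → Set α} {b : ENNReal} (h : ∀ i ∈ I, μ (s i) ≤ b) :
    μ (⋃ i ∈ I, s i) ≤ #I * b :=
  calc μ (⋃ i ∈ I, s i) ≤ ∑ i ∈ I, μ (s i) := measure_biUnion_finset_le I s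
    _ ≤ ∑ _i ∈ I, b := sum_le_sum h
    _ = #I * b := by rw [sum_const, nsmul_eq_mul]

lemma setOf_lt_sum_subset_biUnion_biInter {Ω ι : Type*} [Fintype ι]
    {X : ι → Ω → ℝ} {a : ι → ℝ} (hval : ∀ i ω, X i ω = a i ∨ X i ω = 0) (c : ℝ) :
    {ω | c < ∑ i, X i ω} ⊆
      ⋃ S ∈ univ.filter (fun S : Finset ι => c < ∑ i ∈ S, a i), ⋂ i ∈ S, {ω | X i ω = a i} := by
  intro ω hω
  set S := univ.filter (fun i => X i ω ≠ 0)
  have hXa : ∀ i ∈ S, X i ω = a i := fun i hi =>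
    (hval i ω).resolve_right (mem_filter.mp hi).2
  have hsum : ∑ i, X i ω = ∑ i ∈ S, a i := by
    rw [← sum_filter_ne_zero]
    exact sum_congr rfl hXa
  refine Set.mem_biUnion (x := S) (mem_filter.mpr ⟨mem_univ S, ?_⟩) (Set.mem_iInter₂.mpr hXa)
  exact hsum ▸ hω

lemma ProbabilityTheory.iIndepFun.measure_biInter_eq_le_ofReal_exp {Ω ι β : Type*}
    [MeasurableSpace Ω] [MeasurableSpace β] [MeasurableSingletonClass β] {μ : Measure Ω}
    {X : ι → Ω → β} (hindep : iIndepFun X μ) {a : ι → β} {f : ι → ℝ}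
    (hprob : ∀ i, μ {ω | X i ω = a i} ≤ ENNReal.ofReal (Real.exp (-f i))) (S : Finset ι) :
    μ (⋂ i ∈ S, {ω | X i ω = a i}) ≤ ENNReal.ofReal (Real.exp (-∑ i ∈ S, f i)) := by
  rw [hindep.meas_biInter (s := fun i => {ω | X i ω = a i})
      fun i _ => ⟨{a i}, measurableSet_singleton _, rfl⟩,
    ← sum_neg_distrib, Real.exp_sum, ENNReal.ofReal_prod_of_nonneg fun i _ => (Real.exp_pos _).le]
  exact prod_le_prod' fun i _ => hprob i

theorem chernoff_type_bound_general {Ω : Type*} [MeasurableSpace Ω]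
    (P : Measure Ω)
    (k : ℕ) (hk : 0 < k)
    (X : Fin k → Ω → ℝ) (a : Fin k → ℝ) (t ε : ℝ)
    (hindep : iIndepFun X P)
    (hval : ∀ i ω, X i ω = a i ∨ X i ω = 0)
    (hprob : ∀ i, P {ω | X i ω = a i} ≤ ENNReal.ofReal (Real.exp (-(a i) ^ 2 * t)))
    (hε : 0 < ε) (htε : 2 / ε ^ 2 ≤ t) :
    P {ω | ε < (∑ i, X i ω) / k} < ENNReal.ofReal (Real.exp (-(ε ^ 2 * t * k) / 2)) := by
  have hεt : 2 ≤ ε ^ 2 * t := by rwa [div_le_iff₀' (by positivity)] at htε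
  have ht : 0 ≤ t := by nlinarith
  have hevent : {ω | ε < (∑ i, X i ω) / k} = {ω | ε * k < ∑ i, X i ω} := by
    ext ω; exact lt_div_iff₀ (by exact_mod_cast hk : (0 : ℝ) < k)
  have hbad : ∀ S ∈ univ.filter (fun S : Finset (Fin k) => ε * k < ∑ i ∈ S, a i),
      P (⋂ i ∈ S, {ω | X i ω = a i}) ≤ ENNReal.ofReal (Real.exp (-(ε ^ 2 * t * k))) := by
    intro S hS
    have hsq := sq_mul_le_sum_sq_of_mul_le_sum hε.le (by simpa using card_le_univ S)
      (mem_filter.mp hS).2.le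
    refine (hindep.measure_biInter_eq_le_ofReal_exp (f := fun i => a i ^ 2 * t)
      (by simpa only [neg_mul] using hprob) S).trans ?_
    gcongr
    rw [← sum_mul]
    nlinarith
  calc P {ω | ε < (∑ i, X i ω) / k}
      ≤ (2 ^ k : ℕ) * ENNReal.ofReal (Real.exp (-(ε ^ 2 * t * k))) := by
        rw [hevent]
        refine (measure_mono (setOf_lt_sum_subset_biUnion_biInter hval _)).trans
          ((measure_biUnion_finset_le_card_mul hbad).trans ?_)
        gcongr
        exact (card_filter_le _ _).trans (by simp)
    _ = ENNReal.ofReal (2 ^ k * Real.exp (-(ε ^ 2 * t * k))) := by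
        rw [ENNReal.ofReal_mul (by positivity)]; norm_cast
    _ < ENNReal.ofReal (Real.exp (-(ε ^ 2 * t * k) / 2)) :=
        (ENNReal.ofReal_lt_ofReal_iff (Real.exp_pos _)).mpr (two_pow_mul_exp_neg_lt hk hεt)

/-- Chernoff-type bound: if `X₁,…,X_k` are independent, each `Xᵢ` takes the value
`aᵢ ≥ 0` with probability at most `exp(−aᵢ² t)` and `0` otherwise, and `X` is their
average, then for `ε > 0` with `t ≥ 2/ε²` we have `Pr[X > ε] < exp(−ε² t k / 2)`. -/
theorem chernoff_type_bound {Ω : Type*} [MeasurableSpace Ω]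
    (P : Measure Ω) [IsProbabilityMeasure P]
    (k : ℕ) (hk : 0 < k)
    (X : Fin k → Ω → ℝ) (a : Fin k → ℝ) (t ε : ℝ)
    (hmeas : ∀ i, Measurable (X i))
    (hindep : iIndepFun X P)
    (ha : ∀ i, 0 ≤ a i)
    (hval : ∀ i ω, X i ω = a i ∨ X i ω = 0)
    (ht : 0 ≤ t)
    (hprob : ∀ i, P {ω | X i ω = a i} ≤ ENNReal.ofReal (Real.exp (-(a i) ^ 2 * t)))
    (hε : 0 < ε) (htε : 2 / ε ^ 2 ≤ t) :
    P {ω | ε < (∑ i, X i ω) / k} < ENNReal.ofReal (Real.exp (-(ε ^ 2 * t * k) / 2)) :=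
  chernoff_type_bound_general P k hk X a t ε hindep hval hprob hε htε
end

section
/- Let M be a matroid with injective weights, OPT its unique maximum-weight basis, and I any basis output by the greedy algorithm with respect to an empirical cost function μ̂ satisfying |μ(e) − μ̂(e)| ≤ ε/2 for all e ∈ S. Then I is ε-optimal for M with respect to μ. -/
open Matroid Set

variable {α : Type*}

/-! Two bases `I` and `J` have equally many elements outside each other. Trading `I \ J` for
`J \ I` changes the `μ`-weight by at most `ε/2` per element more than it changes the
`μ̂`-weight, and the latter change is nonpositive since `I` is `μ̂`-optimal; this slack of `ε`
per element of `I \ J` is exactly the bonus that `μ_{I,ε}` gives to `I` over `J`. -/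

section Weight

variable {μ ν : α → ℝ} {I J S : Set α} {c ε : ℝ}

theorem wt_modCost (hS : S.Finite) : wt (modCost μ I ε) S = wt μ S + (S ∩ I).ncard * ε := by
  have hbonus : ∑ᶠ e ∈ S, I.indicator (fun _ => ε) e = ∑ᶠ e ∈ S ∩ I, ε := by
    rw [finsum_mem_def, finsum_mem_def, indicator_indicator]
  simp only [wt, modCost]
  rw [finsum_mem_add_distrib hS, hbonus,
    finsum_mem_eq_finite_toFinset_sum _ (hS.inter_of_left I), Finset.sum_const, nsmul_eq_mul,
    ncard_eq_toFinset_card _ (hS.inter_of_left I)]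

theorem wt_le_wt_add_ncard_mul (hS : S.Finite) (h : ∀ e ∈ S, μ e ≤ ν e + c) :
    wt μ S ≤ wt ν S + S.ncard * c := by
  rw [wt, wt, finsum_mem_eq_finite_toFinset_sum _ hS, finsum_mem_eq_finite_toFinset_sum _ hS,
    ncard_eq_toFinset_card _ hS]
  calc ∑ e ∈ hS.toFinset, μ e ≤ ∑ e ∈ hS.toFinset, (ν e + c) :=
        Finset.sum_le_sum fun e he => h e (hS.mem_toFinset.mp he)
    _ = ∑ e ∈ hS.toFinset, ν e + hS.toFinset.card * c := by
        rw [Finset.sum_add_distrib, Finset.sum_const, nsmul_eq_mul]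

theorem wt_sub_wt_eq_wt_sdiff_sub_wt_sdiff (hI : I.Finite) (hJ : J.Finite) :
    wt μ J - wt μ I = wt μ (J \ I) - wt μ (I \ J) := by
  rw [wt, wt, wt, wt, ← finsum_mem_inter_add_sdiff I hJ, ← finsum_mem_inter_add_sdiff J hI,
    inter_comm]
  ring

theorem wt_sub_wt_le_of_abs_sub_le (hI : I.Finite) (hJ : J.Finite)
    (hcard : (J \ I).ncard = (I \ J).ncard) (hclose : ∀ e ∈ I ∪ J, |μ e - ν e| ≤ ε / 2) :
    wt μ J - wt μ I ≤ wt ν J - wt ν I + (I \ J).ncard * ε := by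
  have hJI : wt μ (J \ I) ≤ wt ν (J \ I) + (J \ I).ncard * (ε / 2) :=
    wt_le_wt_add_ncard_mul hJ.sdiff fun e he =>
      by linarith [(abs_sub_le_iff.mp (hclose e (Or.inr he.1))).1]
  have hIJ : wt ν (I \ J) ≤ wt μ (I \ J) + (I \ J).ncard * (ε / 2) :=
    wt_le_wt_add_ncard_mul hI.sdiff fun e he =>
      by linarith [(abs_sub_le_iff.mp (hclose e (Or.inl he.1))).2]
  rw [hcard] at hJI
  rw [wt_sub_wt_eq_wt_sdiff_sub_wt_sdiff hI hJ, wt_sub_wt_eq_wt_sdiff_sub_wt_sdiff hI hJ]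
  linarith

theorem wt_modCost_le_of_abs_sub_le (hI : I.Finite) (hJ : J.Finite)
    (hcard : (J \ I).ncard = (I \ J).ncard) (hclose : ∀ e ∈ I ∪ J, |μ e - ν e| ≤ ε / 2)
    (hν : wt ν J ≤ wt ν I) : wt (modCost μ I ε) J ≤ wt (modCost μ I ε) I := by
  have hsplit : ((I ∩ J).ncard : ℝ) * ε + (I \ J).ncard * ε = I.ncard * ε := by
    rw [← add_mul, ← Nat.cast_add, ncard_inter_add_ncard_sdiff_eq_ncard I J hI]
  rw [wt_modCost hJ, wt_modCost hI, inter_self, inter_comm]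
  linarith [wt_sub_wt_le_of_abs_sub_le hI hJ hcard hclose]

end Weight

theorem epsOptimal_of_empirical_general (M : Matroid α) [M.Finite] (μ μhat : α → ℝ)
    (ε : ℝ)
    (hclose : ∀ e ∈ M.E, |μ e - μhat e| ≤ ε / 2)
    (I : Set α) (hI : IsMaxWeightBase M μhat I) :
    EpsOptimal M μ ε I := by
  obtain ⟨hIbase, hImax⟩ := hI
  refine ⟨hIbase, fun J hJbase => ?_⟩
  exact wt_modCost_le_of_abs_sub_le (M.set_finite I hIbase.subset_ground)
    (M.set_finite J hJbase.subset_ground) (hJbase.ncard_sdiff_comm hIbase)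
    (fun e he => hclose e (union_subset hIbase.subset_ground hJbase.subset_ground he))
    (hImax J hJbase)

/-- If `μ̂` is within `ε/2` of `μ` on the ground set and `I` is a maximum-weight
base with respect to `μ̂`, then `I` is `ε`-optimal with respect to `μ`. -/
theorem epsOptimal_of_empirical (M : Matroid α) [M.Finite] (μ μhat : α → ℝ)
    (hinj : Set.InjOn μ M.E) (hpos : ∀ e ∈ M.E, 0 < μ e)
    (ε : ℝ) (hε : 0 < ε)
    (hclose : ∀ e ∈ M.E, |μ e - μhat e| ≤ ε / 2)
    (I : Set α) (hI : IsMaxWeightBase M μhat I) :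
    EpsOptimal M μ ε I :=
  epsOptimal_of_empirical_general M μ μhat ε hclose I hI
end
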